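/- Let F_β : RC_β-sgMod → R_β-sgMod be the Morita equivalence M ↦ e†(β).M, where e†(β) = Σ_{ν : all π₂(ν_i)=0} e(ν). Then for M_i ∈ RC_{β_i}-sgMod there is a natural isomorphism F_{β₁+β₂}(M₁ ∘ M₂) ≅ F_{β₁}(M₁) ∘ F_{β₂}(M₂); that is, F = ⊕_β F_β is a monoidal functor. -/

import Mathlib

/-!
Fullness of `f₁` and `f₂` gives `1 = ∑ᵢ Pᵢ f₁ Qᵢ` and `1 = ∑ⱼ Cⱼ f₂ Dⱼ`. The inclusion
`[r ⊗ m₁ ⊗ m₂] ↦ [r ⊗ m₁ ⊗ m₂]` of `F(M₁) ∘ F(M₂)` into `M₁ ∘ M₂` then has the left inverse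
`[a ⊗ m₁ ⊗ m₂] ↦ ∑ᵢⱼ [fA a ι(Pᵢ f₁ ⊗ Cⱼ f₂) ⊗ f₁ Qᵢ m₁ ⊗ f₂ Dⱼ m₂]`, and the composite in the
other order is the action of `fA`. Hence the inclusion is an isomorphism onto `fA.(M₁ ∘ M₂)`,
and its inverse commutes with the corner ring `fA A fA`. The left inverse respects the
relations of `M₁ ∘ M₂` because `fA a ι(u f₁ ⊗ v f₂)` re-expands through the two
decompositions as a sum of such elements times corner elements `ι(f₁ x f₁ ⊗ f₂ y f₂)`, which
can be moved onto the modules.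
-/

open TensorProduct

universe u v

section

variable {k : Type u} [Field k]

lemma corner_one_mul {A : Type v} [Ring A] {e x : A}
    (he : e * e = e) (hx : e * x * e = x) : e * x = x := by
  conv_lhs => rw [← hx]
  calc e * (e * x * e) = e * e * x * e := by noncomm_ring
    _ = e * x * e := by rw [he]
    _ = x := hx

lemma corner_mul_one {A : Type v} [Ring A] {e x : A}
    (he : e * e = e) (hx : e * x * e = x) : x * e = x := by
  conv_lhs => rw [← hx]
  calc (e * x * e) * e = e * x * (e * e) := by noncomm_ring
    _ = e * x * e := by rw [he]
    _ = x := hx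

/-- Left multiplication by `a`, as a `k`-linear map. -/
def lmulOp {A : Type v} [Ring A] [Algebra k A] (a : A) : A →ₗ[k] A where
  toFun y := a * y
  map_add' y z := mul_add a y z
  map_smul' c y := mul_smul_comm c a y

/-- The corner `eAe` of a superalgebra at an even idempotent `e`, as a subspace. -/
def cornerSubmodule {A : Type v} [Ring A] [Algebra k A] (e : A) : Submodule k A where
  carrier := {x | e * x * e = x}
  add_mem' := by
    intro x y hx hy
    simp only [Set.mem_setOf_eq] at *
    simp only [mul_add, add_mul]
    rw [hx, hy]
  zero_mem' := by simp
  smul_mem' := by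
    intro c x hx
    simp only [Set.mem_setOf_eq] at *
    rw [mul_smul_comm, smul_mul_assoc, hx]

/-- `e.M`, the `e`-fixed subspace of a module. -/
def eFix {B M : Type v} [Ring B] [AddCommGroup M] [Module k M] [Module B M]
    [SMulCommClass k B M] (e : B) : Submodule k M where
  carrier := {m | e • m = m}
  add_mem' := by
    intro x y hx hy
    simp only [Set.mem_setOf_eq] at *
    rw [smul_add, hx, hy]
  zero_mem' := by simp
  smul_mem' := by
    intro c m hm
    simp only [Set.mem_setOf_eq] at *
    rw [← smul_comm c e m, hm]

variable {A1 A2 A : Type v} [Ring A1] [Ring A2] [Ring A]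
  [Algebra k A1] [Algebra k A2] [Algebra k A]
variable (ι : A1 ⊗[k] A2 →ₗ[k] A)
variable (M1 M2 : Type v)
  [AddCommGroup M1] [Module k M1] [Module A1 M1] [SMulCommClass A1 k M1]
  [SMulCommClass k A1 M1]
  [AddCommGroup M2] [Module k M2] [Module A2 M2] [SMulCommClass A2 k M2]
  [SMulCommClass k A2 M2]

/-- The relations defining the convolution product `M₁ ∘ M₂` as a quotient of
`A ⊗ₖ (M₁ ⊗ₖ M₂)`. -/
def convRel : Submodule k (A ⊗[k] (M1 ⊗[k] M2)) :=
  Submodule.span k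
    {z | ∃ (a : A) (b1 : A1) (b2 : A2) (m1 : M1) (m2 : M2),
      z = (a * ι (b1 ⊗ₜ[k] b2)) ⊗ₜ[k] (m1 ⊗ₜ[k] m2)
        - a ⊗ₜ[k] ((b1 • m1) ⊗ₜ[k] (b2 • m2))}

/-- The convolution product `M₁ ∘ M₂`. -/
abbrev ConvMod := (A ⊗[k] (M1 ⊗[k] M2)) ⧸ convRel (k := k) ι M1 M2

/-- The action of `a ∈ RC_{β₁+β₂}` on the convolution product. -/
noncomputable def convSmul (a : A) :
    ConvMod (k := k) ι M1 M2 →ₗ[k] ConvMod (k := k) ι M1 M2 :=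
  Submodule.mapQ _ _ (TensorProduct.map (lmulOp (k := k) a) LinearMap.id)
    (by
      rw [convRel, Submodule.span_le]
      rintro _ ⟨a', b1, b2, m1, m2, rfl⟩
      simp only [SetLike.mem_coe, Submodule.mem_comap, map_sub,
        TensorProduct.map_tmul, LinearMap.id_apply, lmulOp, LinearMap.coe_mk,
        AddHom.coe_mk]
      refine Submodule.subset_span ⟨a * a', b1, b2, m1, m2, ?_⟩
      rw [mul_assoc])

/-- The `e†(β₁+β₂)`-fixed part of `M₁ ∘ M₂`, i.e. `F_{β₁+β₂}(M₁ ∘ M₂)`. -/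
def eConv (fA : A) : Submodule k (ConvMod (k := k) ι M1 M2) where
  carrier := {v | convSmul (k := k) ι M1 M2 fA v = v}
  add_mem' := by
    intro x y hx hy
    simp only [Set.mem_setOf_eq] at *
    rw [map_add, hx, hy]
  zero_mem' := by simp
  smul_mem' := by
    intro c v hv
    simp only [Set.mem_setOf_eq] at *
    rw [map_smul, hv]

noncomputable local instance eFixTensorACG (f1 : A1) (f2 : A2) :
    AddCommGroup (↥(eFix (k := k) (M := M1) f1) ⊗[k] ↥(eFix (k := k) (M := M2) f2)) :=
  TensorProduct.addCommGroup

noncomputable local instance cornerTripleACG (f1 : A1) (f2 : A2) (fA : A) :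
    AddCommGroup
      (↥(cornerSubmodule (k := k) fA) ⊗[k]
        (↥(eFix (k := k) (M := M1) f1) ⊗[k] ↥(eFix (k := k) (M := M2) f2))) :=
  TensorProduct.addCommGroup

noncomputable local instance eFixTensorMod (f1 : A1) (f2 : A2) :
    Module k (↥(eFix (k := k) (M := M1) f1) ⊗[k] ↥(eFix (k := k) (M := M2) f2)) :=
  TensorProduct.leftModule

noncomputable local instance cornerTripleMod (f1 : A1) (f2 : A2) (fA : A) :
    Module k
      (↥(cornerSubmodule (k := k) fA) ⊗[k]
        (↥(eFix (k := k) (M := M1) f1) ⊗[k] ↥(eFix (k := k) (M := M2) f2))) :=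
  TensorProduct.leftModule

/-- The relations defining the convolution product `F_{β₁}(M₁) ∘ F_{β₂}(M₂)` of the
corner modules over the quiver Hecke algebra `R_{β₁+β₂} = e† RC_{β₁+β₂} e†`. -/
noncomputable def cornerConvRel (f1 : A1) (f2 : A2) (fA : A) :
    Submodule k
      (↥(cornerSubmodule (k := k) fA) ⊗[k]
        (↥(eFix (k := k) (M := M1) f1) ⊗[k] ↥(eFix (k := k) (M := M2) f2))) :=
  Submodule.span k
    {z | ∃ (r ru : ↥(cornerSubmodule (k := k) fA)) (c1 : A1) (c2 : A2),
      f1 * c1 * f1 = c1 ∧ f2 * c2 * f2 = c2 ∧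
      ru.1 = r.1 * ι (c1 ⊗ₜ[k] c2) ∧
      ∃ (m1 m1' : ↥(eFix (k := k) (M := M1) f1))
        (m2 m2' : ↥(eFix (k := k) (M := M2) f2)),
        m1'.1 = c1 • m1.1 ∧ m2'.1 = c2 • m2.1 ∧
        z = ru ⊗ₜ[k] (m1 ⊗ₜ[k] m2) - r ⊗ₜ[k] (m1' ⊗ₜ[k] m2')}

/-- The convolution product `F_{β₁}(M₁) ∘ F_{β₂}(M₂)`. -/
abbrev CornerConvMod (f1 : A1) (f2 : A2) (fA : A) :=
  (↥(cornerSubmodule (k := k) fA) ⊗[k]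
      (↥(eFix (k := k) (M := M1) f1) ⊗[k] ↥(eFix (k := k) (M := M2) f2))) ⧸
    cornerConvRel (k := k) ι M1 M2 f1 f2 fA

/-- Left multiplication by a corner element on the corner ring. -/
def cornerLmul (fA : A) (hfA : fA * fA = fA)
    (r0 : ↥(cornerSubmodule (k := k) fA)) :
    ↥(cornerSubmodule (k := k) fA) →ₗ[k] ↥(cornerSubmodule (k := k) fA) where
  toFun u :=
    ⟨r0.1 * u.1, by
      show fA * (r0.1 * u.1) * fA = r0.1 * u.1
      calc fA * (r0.1 * u.1) * fA = (fA * r0.1) * (u.1 * fA) := by noncomm_ring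
        _ = r0.1 * u.1 := by
            rw [corner_one_mul hfA r0.2, corner_mul_one hfA u.2]⟩
  map_add' u u' := Subtype.ext (mul_add r0.1 u.1 u'.1)
  map_smul' c u := Subtype.ext (mul_smul_comm c r0.1 u.1)

/-- The action of a corner element `r₀ ∈ R_{β₁+β₂}` on `F_{β₁}(M₁) ∘ F_{β₂}(M₂)`. -/
noncomputable def cornerConvSmul (f1 : A1) (f2 : A2) (fA : A) (hfA : fA * fA = fA)
    (r0 : ↥(cornerSubmodule (k := k) fA)) :
    CornerConvMod (k := k) ι M1 M2 f1 f2 fA →ₗ[k]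
      CornerConvMod (k := k) ι M1 M2 f1 f2 fA :=
  Submodule.mapQ _ _
    (TensorProduct.map (cornerLmul (k := k) fA hfA r0) LinearMap.id)
    (by
      rw [cornerConvRel, Submodule.span_le]
      rintro _ ⟨r, ru, c1, c2, hc1, hc2, hru, m1, m1', m2, m2', hm1, hm2, rfl⟩
      simp only [SetLike.mem_coe, Submodule.mem_comap, map_sub,
        TensorProduct.map_tmul, LinearMap.id_apply]
      refine Submodule.subset_span
        ⟨cornerLmul (k := k) fA hfA r0 r, cornerLmul (k := k) fA hfA r0 ru,
          c1, c2, hc1, hc2, ?_, m1, m1', m2, m2', hm1, hm2, rfl⟩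
      show r0.1 * ru.1 = (r0.1 * r.1) * ι (c1 ⊗ₜ[k] c2)
      rw [hru, mul_assoc])

section MoritaMonoidal

set_option linter.unusedSectionVars false

lemma mul_mem_cornerSubmodule {B : Type v} [Ring B] [Algebra k B] {e x y : B}
    (hx : e * x = x) (hy : y * e = y) : x * y ∈ cornerSubmodule (k := k) e :=
  show e * (x * y) * e = x * y by rw [← mul_assoc, hx, mul_assoc, hy]

lemma mul_mul_mem_cornerSubmodule {B : Type v} [Ring B] [Algebra k B] {e : B}
    (he : e * e = e) (x : B) : e * x * e ∈ cornerSubmodule (k := k) e :=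
  mul_mem_cornerSubmodule (IsIdempotentElem.mul_self_mul he x) he

structure FullDecomp {B : Type v} [Ring B] (f : B) where
  n : ℕ
  left : Fin n → B
  right : Fin n → B
  sum_eq_one : ∑ i, left i * f * right i = 1

lemma FullDecomp.nonempty {B : Type v} [Ring B] [Algebra k B] {f : B}
    (h : Submodule.span k {x : B | ∃ a b : B, x = a * f * b} = ⊤) :
    Nonempty (FullDecomp f) := by
  obtain ⟨n, c, g, hsum⟩ := Submodule.mem_span_set'.mp (h ▸ Submodule.mem_top (x := (1 : B)))
  choose a b hab using fun i => (g i).2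
  refine ⟨⟨n, fun i => c i • a i, b, ?_⟩⟩
  rw [← hsum]
  exact Finset.sum_congr rfl fun i _ => by rw [smul_mul_assoc, smul_mul_assoc, ← hab]

section ToEFix

variable {B M : Type v} [Ring B] [AddCommGroup M] [Module k M] [Module B M]
  [SMulCommClass k B M] {f : B} (hf : f * f = f)

variable (k) in
def toEFix (w : B) : M →ₗ[k] eFix (k := k) (M := M) f where
  toFun m := ⟨(f * w) • m, show f • (f * w) • m = (f * w) • m by
    rw [smul_smul, IsIdempotentElem.mul_self_mul hf]⟩
  map_add' m m' := Subtype.ext (smul_add _ m m')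
  map_smul' c m := Subtype.ext (smul_comm c _ m).symm

@[simp]
lemma coe_toEFix (w : B) (m : M) : (toEFix k hf w m : M) = (f * w) • m := rfl

lemma coe_toEFix_of_mem (w : B) (m : eFix (k := k) (M := M) f) :
    (toEFix k hf w (m : M) : M) = (f * w * f) • (m : M) := by
  rw [coe_toEFix, mul_smul _ f, show f • (m : M) = m from m.2]

lemma toEFix_one_of_mem (m : eFix (k := k) (M := M) f) : toEFix k hf 1 (m : M) = m :=
  Subtype.ext (by rw [coe_toEFix, mul_one]; exact m.2)

lemma toEFix_smul (w b : B) (m : M) : toEFix k hf w (b • m) = toEFix k hf (w * b) m :=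
  Subtype.ext (by simp only [coe_toEFix, smul_smul, mul_assoc])

lemma toEFix_toEFix (w w' : B) (m : M) :
    toEFix k hf w (toEFix k hf w' m : M) = toEFix k hf (w * f * w') m :=
  Subtype.ext (by simp only [coe_toEFix, smul_smul, mul_assoc])

lemma sum_toEFix (d : FullDecomp f) (w : B) (m : M) :
    ∑ i, toEFix k hf (w * d.left i * f * d.right i) m = toEFix k hf w m := by
  have hw : ∑ i, w * d.left i * f * d.right i = w := by
    calc ∑ i, w * d.left i * f * d.right i = w * ∑ i, d.left i * f * d.right i := by
          simp only [Finset.mul_sum, mul_assoc]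
      _ = w := by rw [d.sum_eq_one, mul_one]
  apply Subtype.ext
  simp only [Submodule.coe_sum, coe_toEFix, ← Finset.sum_smul, ← Finset.mul_sum, hw]

end ToEFix

lemma convMod_mk_mul_ι (a : A) (b1 : A1) (b2 : A2) (m1 : M1) (m2 : M2) :
    (Submodule.Quotient.mk ((a * ι (b1 ⊗ₜ[k] b2)) ⊗ₜ[k] (m1 ⊗ₜ[k] m2)) : ConvMod ι M1 M2) =
      Submodule.Quotient.mk (a ⊗ₜ[k] ((b1 • m1) ⊗ₜ[k] (b2 • m2))) :=
  (Submodule.Quotient.eq _).mpr (Submodule.subset_span ⟨a, b1, b2, m1, m2, rfl⟩)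

lemma convSmul_mk (x a : A) (m1 : M1) (m2 : M2) :
    convSmul ι M1 M2 x (Submodule.Quotient.mk (a ⊗ₜ[k] (m1 ⊗ₜ[k] m2))) =
      Submodule.Quotient.mk ((x * a) ⊗ₜ[k] (m1 ⊗ₜ[k] m2)) :=
  rfl

lemma cornerConvSmul_mk {f1 : A1} {f2 : A2} {fA : A} (hfA : fA * fA = fA)
    (r y : cornerSubmodule (k := k) fA)
    (m1 : eFix (k := k) (M := M1) f1) (m2 : eFix (k := k) (M := M2) f2) :
    cornerConvSmul ι M1 M2 f1 f2 fA hfA r (Submodule.Quotient.mk (y ⊗ₜ[k] (m1 ⊗ₜ[k] m2))) =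
      Submodule.Quotient.mk (cornerLmul fA hfA r y ⊗ₜ[k] (m1 ⊗ₜ[k] m2)) :=
  rfl

noncomputable def cornerConvIncl (f1 : A1) (f2 : A2) (fA : A) :
    CornerConvMod ι M1 M2 f1 f2 fA →ₗ[k] ConvMod ι M1 M2 :=
  Submodule.liftQ _ ((convRel ι M1 M2).mkQ ∘ₗ
      TensorProduct.map (cornerSubmodule fA).subtype
        (TensorProduct.map (eFix (M := M1) f1).subtype (eFix (M := M2) f2).subtype)) (by
    rw [cornerConvRel, Submodule.span_le]
    rintro _ ⟨r, ru, c1, c2, -, -, hru, m1, m1', m2, m2', hm1, hm2, rfl⟩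
    simp [hru, hm1, hm2, convMod_mk_mul_ι])

lemma cornerConvIncl_mk {f1 : A1} {f2 : A2} {fA : A} (r : cornerSubmodule (k := k) fA)
    (m1 : eFix (k := k) (M := M1) f1) (m2 : eFix (k := k) (M := M2) f2) :
    cornerConvIncl ι M1 M2 f1 f2 fA (Submodule.Quotient.mk (r ⊗ₜ[k] (m1 ⊗ₜ[k] m2))) =
      Submodule.Quotient.mk ((r : A) ⊗ₜ[k] ((m1 : M1) ⊗ₜ[k] (m2 : M2))) :=
  rfl

structure MoritaContext (f1 : A1) (f2 : A2) (fA : A) where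
  map_mul : ∀ x y : A1 ⊗[k] A2, ι (x * y) = ι x * ι y
  idem1 : f1 * f1 = f1
  idem2 : f2 * f2 = f2
  idemA : fA * fA = fA
  ι_mul_fA : ι (f1 ⊗ₜ[k] f2) * fA = ι (f1 ⊗ₜ[k] f2)
  decomp1 : FullDecomp f1
  decomp2 : FullDecomp f2

namespace MoritaContext

variable {ι M1 M2} {f1 : A1} {f2 : A2} {fA : A}

lemma ι_tmul_mul_fA (S : MoritaContext ι f1 f2 fA) (u : A1) (v : A2) :
    ι ((u * f1) ⊗ₜ[k] (v * f2)) * fA = ι ((u * f1) ⊗ₜ[k] (v * f2)) := by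
  rw [← Algebra.TensorProduct.tmul_mul_tmul, S.map_mul, mul_assoc, S.ι_mul_fA]

variable (S : MoritaContext ι f1 f2 fA)

def toCorner (u : A1) (v : A2) : A →ₗ[k] cornerSubmodule (k := k) fA :=
  LinearMap.codRestrict _
    (LinearMap.mulRight k (ι ((u * f1) ⊗ₜ[k] (v * f2))) ∘ₗ LinearMap.mulLeft k fA)
    fun a =>
      mul_mem_cornerSubmodule (IsIdempotentElem.mul_self_mul S.idemA a) (S.ι_tmul_mul_fA u v)

@[simp]
lemma coe_toCorner (u : A1) (v : A2) (a : A) :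
    (S.toCorner u v a : A) = fA * a * ι ((u * f1) ⊗ₜ[k] (v * f2)) :=
  rfl

def rightMul (r : cornerSubmodule (k := k) fA) (c1 : A1) (c2 : A2) :
    cornerSubmodule (k := k) fA :=
  ⟨r * ι ((f1 * c1 * f1) ⊗ₜ[k] (f2 * c2 * f2)),
    mul_mem_cornerSubmodule (corner_one_mul S.idemA r.2) (S.ι_tmul_mul_fA _ _)⟩

lemma mk_rightMul (r : cornerSubmodule (k := k) fA) (c1 : A1) (c2 : A2)
    (m1 : eFix (k := k) (M := M1) f1) (m2 : eFix (k := k) (M := M2) f2) :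
    (Submodule.Quotient.mk (S.rightMul r c1 c2 ⊗ₜ[k] (m1 ⊗ₜ[k] m2)) :
        CornerConvMod ι M1 M2 f1 f2 fA) =
      Submodule.Quotient.mk
        (r ⊗ₜ[k] (toEFix k S.idem1 c1 (m1 : M1) ⊗ₜ[k] toEFix k S.idem2 c2 (m2 : M2))) :=
  (Submodule.Quotient.eq _).mpr <| Submodule.subset_span
    ⟨r, _, _, _, mul_mul_mem_cornerSubmodule (k := k) S.idem1 c1,
      mul_mul_mem_cornerSubmodule (k := k) S.idem2 c2,
      rfl, m1, _, m2, _, coe_toEFix_of_mem S.idem1 c1 m1, coe_toEFix_of_mem S.idem2 c2 m2, rfl⟩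

lemma toCorner_mul_ι (u : A1) (v : A2) (a : A) (b1 : A1) (b2 : A2) :
    S.toCorner u v (a * ι (b1 ⊗ₜ[k] b2)) = S.toCorner (b1 * u) (b2 * v) a :=
  Subtype.ext (by
    simp only [coe_toCorner, mul_assoc, ← S.map_mul, Algebra.TensorProduct.tmul_mul_tmul])

lemma toCorner_mul (r : cornerSubmodule (k := k) fA) (u : A1) (v : A2) (a : A) :
    S.toCorner u v (r * a) = cornerLmul fA S.idemA r (S.toCorner u v a) :=
  Subtype.ext (by
    simp only [coe_toCorner, cornerLmul, LinearMap.coe_mk, AddHom.coe_mk, ← mul_assoc,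
      corner_one_mul S.idemA r.2, corner_mul_one S.idemA r.2])

lemma toCorner_one_one (r : cornerSubmodule (k := k) fA) :
    S.toCorner 1 1 r = S.rightMul r 1 1 :=
  Subtype.ext (by
    simp only [coe_toCorner, rightMul, one_mul, mul_one, S.idem1, S.idem2,
      corner_one_mul S.idemA r.2])

lemma toCorner_eq_sum (u : A1) (v : A2) (a : A) :
    S.toCorner u v a = ∑ p : Fin S.decomp1.n × Fin S.decomp2.n,
      S.rightMul (S.toCorner (S.decomp1.left p.1) (S.decomp2.left p.2) a)
        (S.decomp1.right p.1 * u) (S.decomp2.right p.2 * v) := by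
  have hterm : ∀ p : Fin S.decomp1.n × Fin S.decomp2.n,
      (S.rightMul (S.toCorner (S.decomp1.left p.1) (S.decomp2.left p.2) a)
        (S.decomp1.right p.1 * u) (S.decomp2.right p.2 * v) : A) =
      fA * a * ι ((S.decomp1.left p.1 * f1 * S.decomp1.right p.1 * u * f1) ⊗ₜ[k]
        (S.decomp2.left p.2 * f2 * S.decomp2.right p.2 * v * f2)) := by
    intro p
    simp only [rightMul, coe_toCorner, mul_assoc (fA * a), ← S.map_mul,
      Algebra.TensorProduct.tmul_mul_tmul]
    simp only [← mul_assoc, IsIdempotentElem.mul_mul_self S.idem1,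
      IsIdempotentElem.mul_mul_self S.idem2]
  apply Subtype.ext
  rw [Submodule.coe_sum, Finset.sum_congr rfl fun p _ => hterm p, ← Finset.mul_sum, ← map_sum,
    Fintype.sum_prod_type]
  simp only [← tmul_sum, ← sum_tmul, ← Finset.sum_mul, S.decomp1.sum_eq_one,
    S.decomp2.sum_eq_one, one_mul, coe_toCorner]

lemma mk_toCorner_eq_sum (u : A1) (v : A2) (a : A)
    (m1 : eFix (k := k) (M := M1) f1) (m2 : eFix (k := k) (M := M2) f2) :
    (Submodule.Quotient.mk (S.toCorner u v a ⊗ₜ[k] (m1 ⊗ₜ[k] m2)) :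
        CornerConvMod ι M1 M2 f1 f2 fA) =
      ∑ p : Fin S.decomp1.n × Fin S.decomp2.n, Submodule.Quotient.mk
        (S.toCorner (S.decomp1.left p.1) (S.decomp2.left p.2) a ⊗ₜ[k]
          (toEFix k S.idem1 (S.decomp1.right p.1 * u) (m1 : M1) ⊗ₜ[k]
            toEFix k S.idem2 (S.decomp2.right p.2 * v) (m2 : M2))) := by
  rw [S.toCorner_eq_sum, sum_tmul, ← Submodule.mkQ_apply, map_sum]
  simp only [Submodule.mkQ_apply, mk_rightMul]

variable (M1 M2) in
noncomputable def toCornerConvAux : A ⊗[k] (M1 ⊗[k] M2) →ₗ[k] CornerConvMod ι M1 M2 f1 f2 fA :=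
  ∑ p : Fin S.decomp1.n × Fin S.decomp2.n, (cornerConvRel ι M1 M2 f1 f2 fA).mkQ ∘ₗ
    TensorProduct.map (S.toCorner (S.decomp1.left p.1) (S.decomp2.left p.2))
      (TensorProduct.map (toEFix k S.idem1 (S.decomp1.right p.1))
        (toEFix k S.idem2 (S.decomp2.right p.2)))

lemma toCornerConvAux_tmul (a : A) (m1 : M1) (m2 : M2) :
    S.toCornerConvAux M1 M2 (a ⊗ₜ[k] (m1 ⊗ₜ[k] m2)) = ∑ p : Fin S.decomp1.n × Fin S.decomp2.n,
      Submodule.Quotient.mk (S.toCorner (S.decomp1.left p.1) (S.decomp2.left p.2) a ⊗ₜ[k]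
        (toEFix k S.idem1 (S.decomp1.right p.1) m1 ⊗ₜ[k]
          toEFix k S.idem2 (S.decomp2.right p.2) m2)) := by
  simp only [toCornerConvAux, LinearMap.sum_apply, LinearMap.comp_apply, map_tmul,
    Submodule.mkQ_apply]

lemma toCornerConvAux_mul_ι (a : A) (b1 : A1) (b2 : A2) (m1 : M1) (m2 : M2) :
    S.toCornerConvAux M1 M2 ((a * ι (b1 ⊗ₜ[k] b2)) ⊗ₜ[k] (m1 ⊗ₜ[k] m2)) =
      S.toCornerConvAux M1 M2 (a ⊗ₜ[k] ((b1 • m1) ⊗ₜ[k] (b2 • m2))) := by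
  rw [toCornerConvAux_tmul, toCornerConvAux_tmul]
  simp only [toCorner_mul_ι]
  rw [Finset.sum_congr rfl fun p _ => S.mk_toCorner_eq_sum _ _ a _ _, Finset.sum_comm]
  simp only [toEFix_toEFix, toEFix_smul]
  refine Finset.sum_congr rfl fun q _ => ?_
  simp only [← Submodule.mkQ_apply, ← map_sum, Fintype.sum_prod_type, ← tmul_sum, ← sum_tmul]
  simp only [← mul_assoc, sum_toEFix]

variable (M1 M2) in
noncomputable def toCornerConv : ConvMod ι M1 M2 →ₗ[k] CornerConvMod ι M1 M2 f1 f2 fA :=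
  Submodule.liftQ _ (S.toCornerConvAux M1 M2) (by
    rw [convRel, Submodule.span_le]
    rintro _ ⟨a, b1, b2, m1, m2, rfl⟩
    rw [SetLike.mem_coe, LinearMap.mem_ker, map_sub, S.toCornerConvAux_mul_ι, sub_self])

lemma toCornerConv_mk (t : A ⊗[k] (M1 ⊗[k] M2)) :
    S.toCornerConv M1 M2 (Submodule.Quotient.mk t) = S.toCornerConvAux M1 M2 t :=
  rfl

lemma toCornerConv_comp_cornerConvIncl :
    S.toCornerConv M1 M2 ∘ₗ cornerConvIncl ι M1 M2 f1 f2 fA = LinearMap.id := by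
  refine Submodule.linearMap_qext _ (TensorProduct.ext_threefold' fun r m1 m2 => ?_)
  simp only [LinearMap.comp_apply, Submodule.mkQ_apply, LinearMap.id_apply, cornerConvIncl_mk,
    toCornerConv_mk, toCornerConvAux_tmul]
  calc _ = (Submodule.Quotient.mk (S.toCorner 1 1 r ⊗ₜ[k] (m1 ⊗ₜ[k] m2)) :
        CornerConvMod ι M1 M2 f1 f2 fA) := by
        rw [S.mk_toCorner_eq_sum 1 1 r]
        simp only [mul_one]
    _ = _ := by rw [toCorner_one_one, mk_rightMul, toEFix_one_of_mem, toEFix_one_of_mem]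

lemma cornerConvIncl_comp_toCornerConv :
    cornerConvIncl ι M1 M2 f1 f2 fA ∘ₗ S.toCornerConv M1 M2 = convSmul ι M1 M2 fA := by
  refine Submodule.linearMap_qext _ (TensorProduct.ext_threefold' fun a m1 m2 => ?_)
  simp only [LinearMap.comp_apply, Submodule.mkQ_apply, toCornerConv_mk, toCornerConvAux_tmul,
    map_sum, cornerConvIncl_mk, coe_toCorner, coe_toEFix, convSmul_mk]
  simp only [← convMod_mk_mul_ι, mul_assoc (fA * a), ← S.map_mul,
    Algebra.TensorProduct.tmul_mul_tmul]
  simp only [← Submodule.mkQ_apply]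
  rw [← map_sum, ← sum_tmul, ← Finset.mul_sum, ← map_sum, Fintype.sum_prod_type]
  simp only [← tmul_sum, ← sum_tmul, ← mul_assoc, IsIdempotentElem.mul_mul_self S.idem1,
    IsIdempotentElem.mul_mul_self S.idem2, S.decomp1.sum_eq_one, S.decomp2.sum_eq_one,
    Submodule.mkQ_apply, convMod_mk_mul_ι, one_smul]

lemma range_cornerConvIncl (S : MoritaContext ι f1 f2 fA) :
    LinearMap.range (cornerConvIncl ι M1 M2 f1 f2 fA) = eConv ι M1 M2 fA := by
  have hfix : ∀ y, y ∈ eConv ι M1 M2 fA ↔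
      cornerConvIncl ι M1 M2 f1 f2 fA (S.toCornerConv M1 M2 y) = y := fun y => by
    rw [← LinearMap.comp_apply, S.cornerConvIncl_comp_toCornerConv]
    rfl
  ext y
  refine ⟨?_, fun hy => ⟨_, (hfix y).mp hy⟩⟩
  rintro ⟨x, rfl⟩
  rw [hfix, ← LinearMap.comp_apply (S.toCornerConv M1 M2), S.toCornerConv_comp_cornerConvIncl,
    LinearMap.id_apply]

lemma toCornerConv_comp_convSmul (r : cornerSubmodule (k := k) fA) :
    S.toCornerConv M1 M2 ∘ₗ convSmul ι M1 M2 r =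
      cornerConvSmul ι M1 M2 f1 f2 fA S.idemA r ∘ₗ S.toCornerConv M1 M2 := by
  refine Submodule.linearMap_qext _ (TensorProduct.ext_threefold' fun a m1 m2 => ?_)
  simp only [LinearMap.comp_apply, Submodule.mkQ_apply, convSmul_mk, toCornerConv_mk,
    toCornerConvAux_tmul, map_sum, toCorner_mul, cornerConvSmul_mk]

end MoritaContext

end MoritaMonoidal

theorem morita_monoidal
    -- the embedding `RC_{β₁} ⊗ RC_{β₂} ≅ e(β₁,β₂) RC_{β₁+β₂} e(β₁,β₂)`
    (hι : ∀ x y : A1 ⊗[k] A2, ι (x * y) = ι x * ι y)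
    (e12 : A)
    -- the idempotents `e†(β₁)`, `e†(β₂)`, `e†(β₁+β₂)`
    (f1 : A1) (hf1 : f1 * f1 = f1)
    (f2 : A2) (hf2 : f2 * f2 = f2)
    (fA : A) (hfA : fA * fA = fA)
    -- compatibility: `e†(β₁+β₂)·e(β₁,β₂) = e(β₁,β₂)·e†(β₁+β₂) = e†(β₁,β₂)`
    (hdag1 : fA * e12 = ι (f1 ⊗ₜ[k] f2))
    (hdag2 : e12 * fA = ι (f1 ⊗ₜ[k] f2))
    -- fullness of the idempotents
    (hfull1 : Submodule.span k {x : A1 | ∃ a b : A1, x = a * f1 * b} = ⊤)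
    (hfull2 : Submodule.span k {x : A2 | ∃ a b : A2, x = a * f2 * b} = ⊤) :
    ∃ F : ↥(eConv (k := k) ι M1 M2 fA) ≃ₗ[k]
        CornerConvMod (k := k) ι M1 M2 f1 f2 fA,
      -- `F` is equivariant for the actions of the corner ring `R_{β₁+β₂}`
      ∀ (r : ↥(cornerSubmodule (k := k) fA))
        (v v' : ↥(eConv (k := k) ι M1 M2 fA)),
        v'.1 = convSmul (k := k) ι M1 M2 r.1 v.1 →
        F v' = cornerConvSmul (k := k) ι M1 M2 f1 f2 fA hfA r (F v) := by
  have hg : ι (f1 ⊗ₜ[k] f2) * fA = ι (f1 ⊗ₜ[k] f2) := by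
    rw [← hdag1, mul_assoc, hdag2, ← hdag1, ← mul_assoc, hfA]
  obtain ⟨d1⟩ := FullDecomp.nonempty (k := k) hfull1
  obtain ⟨d2⟩ := FullDecomp.nonempty (k := k) hfull2
  let S : MoritaContext ι f1 f2 fA := ⟨hι, hf1, hf2, hfA, hg, d1, d2⟩
  have hleft : Function.LeftInverse (S.toCornerConv M1 M2) (cornerConvIncl ι M1 M2 f1 f2 fA) :=
    LinearMap.congr_fun S.toCornerConv_comp_cornerConvIncl
  refine ⟨(LinearEquiv.ofEq _ _ S.range_cornerConvIncl.symm).trans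
    (LinearEquiv.ofLeftInverse hleft).symm, fun r v v' hv => ?_⟩
  show S.toCornerConv M1 M2 v' = cornerConvSmul ι M1 M2 f1 f2 fA hfA r (S.toCornerConv M1 M2 v)
  rw [hv]
  exact LinearMap.congr_fun (S.toCornerConv_comp_convSmul r) v.1
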